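/- If the estimated propensity scores satisfy the balance equation (1/n)∑_{i=1}^n (T_i/π̂_i − 1) = 0 with π̂_i > 0 and T_i ∈ {0,1}, then the Horvitz–Thompson estimator μ̂₁ = (1/n)∑_{i=1}^n T_i Y_i / π̂_i satisfies min{Y_i : T_i = 1} ≤ μ̂₁ ≤ max{Y_i : T_i = 1} (sample boundedness), provided at least one T_i = 1. -/
import Mathlib


open Finset

/-- Sample boundedness of the Horvitz–Thompson estimator under the balance
equation `(1/n) ∑ i (T i / π̂ i - 1) = 0`. -/
theorem stmt_0 (n : ℕ) (hn : 1 ≤ n) (T Y πh : Fin n → ℝ)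
    (hT : ∀ i, T i = 0 ∨ T i = 1) (hπ : ∀ i, 0 < πh i)
    (hbal : (1 / (n : ℝ)) * ∑ i, (T i / πh i - 1) = 0)
    (S : Finset (Fin n)) (hS : S = Finset.univ.filter (fun i => T i = 1))
    (hne : S.Nonempty) :
    S.inf' hne Y ≤ (1 / (n : ℝ)) * ∑ i, T i * Y i / πh i ∧
      (1 / (n : ℝ)) * ∑ i, T i * Y i / πh i ≤ S.sup' hne Y := by
  have hn0 : (0:ℝ) < n := by exact_mod_cast hn
  have hsum : ∑ i, T i / πh i = (n:ℝ) := by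
    have h1 : ∑ i, (T i / πh i - 1) = 0 := by
      have := mul_eq_zero.mp hbal
      rcases this with h | h
      · exact absurd h (by positivity)
      · exact h
    have := Finset.sum_sub_distrib (f := fun i => T i / πh i) (g := fun _ => (1:ℝ))
      (s := (Finset.univ : Finset (Fin n)))
    simp [this, Finset.sum_const, Finset.card_univ] at h1
    linarith
  -- restrict sums to S
  have hTS : ∀ i ∈ S, T i = 1 := by
    intro i hi; rw [hS] at hi; exact (Finset.mem_filter.mp hi).2
  have hTnS : ∀ i ∈ (Finset.univ : Finset (Fin n)), i ∉ S → T i = 0 := by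
    intro i _ hi
    rcases hT i with h | h
    · exact h
    · exact absurd (by rw [hS]; exact Finset.mem_filter.mpr ⟨Finset.mem_univ i, h⟩) hi
  have hsumS : ∑ i ∈ S, 1 / πh i = (n:ℝ) := by
    rw [← hsum]
    rw [← Finset.sum_subset (Finset.subset_univ S)]
    · exact Finset.sum_congr rfl fun i hi => by rw [hTS i hi]
    · intro i hi hni; rw [hTnS i hi hni]; simp
  have hsumY : ∑ i, T i * Y i / πh i = ∑ i ∈ S, Y i / πh i := by
    rw [← Finset.sum_subset (Finset.subset_univ S)]
    · exact (Finset.sum_congr rfl fun i hi => by rw [hTS i hi]; ring).symm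
    · intro i hi hni; rw [hTnS i hi hni]; simp
  constructor
  · rw [hsumY]
    have : S.inf' hne Y * (n:ℝ) ≤ ∑ i ∈ S, Y i / πh i := by
      calc S.inf' hne Y * (n:ℝ) = ∑ i ∈ S, S.inf' hne Y * (1 / πh i) := by
            rw [← Finset.mul_sum, hsumS]
        _ ≤ ∑ i ∈ S, Y i / πh i := by
            apply Finset.sum_le_sum
            intro i hi
            have h1 : S.inf' hne Y ≤ Y i := Finset.inf'_le Y hi
            have h2 : 0 < 1 / πh i := div_pos one_pos (hπ i)
            calc S.inf' hne Y * (1 / πh i) ≤ Y i * (1 / πh i) :=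
                  mul_le_mul_of_nonneg_right h1 h2.le
              _ = Y i / πh i := by ring
    rw [one_div, inv_mul_eq_div, le_div_iff₀ hn0]
    linarith
  · rw [hsumY]
    have : ∑ i ∈ S, Y i / πh i ≤ S.sup' hne Y * (n:ℝ) := by
      calc ∑ i ∈ S, Y i / πh i ≤ ∑ i ∈ S, S.sup' hne Y * (1 / πh i) := by
            apply Finset.sum_le_sum
            intro i hi
            have h1 : Y i ≤ S.sup' hne Y := Finset.le_sup' Y hi
            have h2 : 0 < 1 / πh i := div_pos one_pos (hπ i)
            calc Y i / πh i = Y i * (1 / πh i) := by ring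
              _ ≤ S.sup' hne Y * (1 / πh i) := mul_le_mul_of_nonneg_right h1 h2.le
        _ = S.sup' hne Y * (n:ℝ) := by rw [← Finset.mul_sum, hsumS]
    rw [one_div, inv_mul_eq_div, div_le_iff₀ hn0]
    linarith
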